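/- Let T ≥ 1, D > 0, H = {x : {0,...,T+1} → ℝ : x(0)=x(T+1)=0} with norm ‖x‖ = (∑_{k=1}^{T+1}|Δx(k−1)|²)^{1/2}, and c₂ the discrete Poincaré constant. Let F : {1,...,T} × ℝ × ℝ × [−D,D] → ℝ be continuous and suppose: (H2) for each y ∈ H there exist β₁ ∈ ℝ, γ₁ : {1,...,T} → ℝ and α₁ < 1/(2c₂) with F(k,s,y(k),u) ≥ −α₁ s² + β₁ s + γ₁(k) for all s ∈ ℝ, |u| ≤ D, k; (H3) the symmetric upper bound F(k,x(k),t,u) ≤ α₂ t² + β₂ t + γ₂(k) with α₂ < 1/(2c₂); (H4) x ↦ J_u(x,y) is convex; (H5) y ↦ J_u(x,y) is concave, where J_u(x,y) = ∑_{k=1}^{T+1}(|Δx(k−1)|²/2 − |Δy(k−1)|²/2) + ∑_{k=1}^T F(k,x(k),y(k),u(k)). Then for each parameter u : {1,...,T} → [−D,D] the functional J_u has at least one saddle point (x_u,y_u) ∈ H × H, and the set of all saddle points of J_u is compact. -/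

import Mathlib

/-!
On a box `H ∩ [-R, R]^ℕ`, which is compact and convex, Sion's minimax theorem gives a saddle point
of `J_u`. By H2 and H3 at `0` and the Poincaré inequality, `x ↦ J_u x 0` is coercive from below and
`y ↦ J_u 0 y` coercive from above, so every pair with `J_u x 0 ≤ J_u 0 y`, in particular every
saddle point, lies in a fixed box of radius `r`. For `R = r + 1` the saddle point of the box is
therefore interior relative to `H`, hence a local and, by H4–H5, a global saddle point on `H`. The
same bound confines the closed set of all saddle points to a compact set.
-/

open Set Filter Topology

section SaddlePoint

variable {E F β : Type*} {X : Set E} {Y : Set F} {f : E → F → β} {a : E} {b : F}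

lemma isSaddlePointOn_iff_forall_le_and_le [Preorder β] (ha : a ∈ X) (hb : b ∈ Y) :
    IsSaddlePointOn X Y f a b ↔ ∀ x ∈ X, ∀ y ∈ Y, f a y ≤ f a b ∧ f a b ≤ f x b :=
  ⟨fun h x hx y hy => ⟨h a ha y hy, h x hx b hb⟩,
    fun h x hx y hy => (h a ha y hy).1.trans (h x hx b hb).2⟩

lemma isClosed_setOf_saddlePoint [Preorder β] [TopologicalSpace E] [TopologicalSpace F]
    [TopologicalSpace β] [OrderClosedTopology β] (hX : IsClosed X) (hY : IsClosed Y)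
    (hf : Continuous fun p : E × F => f p.1 p.2) :
    IsClosed {p : E × F | p.1 ∈ X ∧ p.2 ∈ Y ∧
      ∀ x ∈ X, ∀ y ∈ Y, f p.1 y ≤ f p.1 p.2 ∧ f p.1 p.2 ≤ f x p.2} := by
  simp only [ofPred_and, ofPred_forall]
  refine (hX.preimage continuous_fst).inter ((hY.preimage continuous_snd).inter
    (isClosed_iInter fun x => isClosed_iInter fun _ => isClosed_iInter fun y =>
      isClosed_iInter fun _ => ?_))
  exact (isClosed_le (hf.comp (continuous_fst.prodMk continuous_const)) hf).inter
    (isClosed_le hf (hf.comp (continuous_const.prodMk continuous_snd)))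

lemma IsSaddlePointOn.of_mem_nhdsWithin
    [AddCommGroup E] [TopologicalSpace E] [Module ℝ E] [IsTopologicalAddGroup E]
    [ContinuousSMul ℝ E] [AddCommGroup F] [TopologicalSpace F] [Module ℝ F]
    [IsTopologicalAddGroup F] [ContinuousSMul ℝ F] {f : E → F → ℝ} {U : Set E} {V : Set F}
    (h : IsSaddlePointOn U V f a b) (ha : a ∈ X) (hb : b ∈ Y)
    (hU : U ∈ 𝓝[X] a) (hV : V ∈ 𝓝[Y] b)
    (hconv : ConvexOn ℝ X fun x => f x b) (hconc : ConcaveOn ℝ Y (f a)) :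
    IsSaddlePointOn X Y f a b := by
  have hmin : IsMinOn (fun x => f x b) X a :=
    .of_isLocalMinOn_of_convexOn ha
      (Filter.mem_of_superset hU fun x hx => h x hx b (mem_of_mem_nhdsWithin hb hV)) hconv
  have hmax : IsMaxOn (f a) Y b :=
    .of_isLocalMaxOn_of_concaveOn hb
      (Filter.mem_of_superset hV fun y hy => h a (mem_of_mem_nhdsWithin ha hU) y hy) hconc
  exact fun x hx y hy => (hmax hy).trans (hmin hx)

end SaddlePoint

lemma exists_sub_le_sum_quadratic {ι : Type*} (s : Finset ι) {e : ℝ} (he : 0 < e) (β : ℝ)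
    (γ : ι → ℝ) : ∃ C, ∀ x : ι → ℝ,
      e / 2 * ∑ k ∈ s, x k ^ 2 - C ≤ ∑ k ∈ s, (e * x k ^ 2 + β * x k + γ k) := by
  refine ⟨∑ k ∈ s, (β ^ 2 / (2 * e) - γ k), fun x => ?_⟩
  rw [Finset.mul_sum, ← Finset.sum_sub_distrib]
  refine Finset.sum_le_sum fun k _ => ?_
  have hsq : e / 2 * x k ^ 2 + β * x k + β ^ 2 / (2 * e) = (e * x k + β) ^ 2 / (2 * e) := by
    field_simp
    ring
  have : 0 ≤ (e * x k + β) ^ 2 / (2 * e) := by positivity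
  linarith

lemma exists_coercive_bound {ι : Type*} (s : Finset ι) {S : Set (ι → ℝ)} {A : (ι → ℝ) → ℝ}
    {c : ℝ} (hc : 0 < c) (hA : ∀ x ∈ S, ∑ k ∈ s, x k ^ 2 ≤ c * A x)
    {G : ι → ℝ → ℝ} {α β : ℝ} {γ : ι → ℝ} (hα : α < 1 / (2 * c))
    (hG : ∀ k ∈ s, ∀ t, -α * t ^ 2 + β * t + γ k ≤ G k t) :
    ∃ δ > 0, ∃ C, ∀ x ∈ S, δ * ∑ k ∈ s, x k ^ 2 - C ≤ A x / 2 + ∑ k ∈ s, G k (x k) := by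
  obtain ⟨C, hC⟩ := exists_sub_le_sum_quadratic s (sub_pos.2 hα) β γ
  refine ⟨(1 / (2 * c) - α) / 2, by linarith, C, fun x hx => ?_⟩
  have hpoincare : 1 / (2 * c) * ∑ k ∈ s, x k ^ 2 ≤ A x / 2 := by
    rw [one_div, ← div_eq_inv_mul, div_le_div_iff₀ (by positivity) two_pos]
    nlinarith [hA x hx]
  calc (1 / (2 * c) - α) / 2 * ∑ k ∈ s, x k ^ 2 - C
      ≤ ∑ k ∈ s, ((1 / (2 * c) - α) * x k ^ 2 + β * x k + γ k) := hC x
    _ = 1 / (2 * c) * ∑ k ∈ s, x k ^ 2 + ∑ k ∈ s, (-α * x k ^ 2 + β * x k + γ k) := by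
      rw [Finset.mul_sum, ← Finset.sum_add_distrib]
      exact Finset.sum_congr rfl fun k _ => by ring
    _ ≤ A x / 2 + ∑ k ∈ s, G k (x k) :=
      add_le_add hpoincare (Finset.sum_le_sum fun k hk => hG k hk _)

def dirichletSpace (T : ℕ) : Set (ℕ → ℝ) := {x | x 0 = 0 ∧ ∀ k, T + 1 ≤ k → x k = 0}

namespace dirichletSpace

variable {T : ℕ} {x : ℕ → ℝ}

lemma zero_mem : (0 : ℕ → ℝ) ∈ dirichletSpace T := ⟨rfl, fun _ _ => rfl⟩

lemma convex : Convex ℝ (dirichletSpace T) := by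
  rintro x ⟨hx0, hx⟩ y ⟨hy0, hy⟩ a b - - -
  exact ⟨by simp [hx0, hy0], fun k hk => by simp [hx k hk, hy k hk]⟩

lemma isClosed : IsClosed (dirichletSpace T) := by
  simp only [dirichletSpace, ofPred_and, ofPred_forall]
  exact (isClosed_eq (continuous_apply 0) continuous_const).inter <|
    isClosed_iInter fun k => isClosed_iInter fun _ =>
      isClosed_eq (continuous_apply k) continuous_const

lemma apply_eq_zero (hx : x ∈ dirichletSpace T) {k : ℕ} (hk : k ∉ Finset.Icc 1 T) : x k = 0 := by
  rw [Finset.mem_Icc, not_and_or, not_le, not_le, Nat.lt_one_iff] at hk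
  rcases hk with rfl | hk
  exacts [hx.1, hx.2 k hk]

lemma abs_apply_le_sqrt_sum_sq (hx : x ∈ dirichletSpace T) (k : ℕ) :
    |x k| ≤ √(∑ j ∈ Finset.Icc 1 T, x j ^ 2) := by
  by_cases hk : k ∈ Finset.Icc 1 T
  · exact Real.abs_le_sqrt (Finset.single_le_sum (fun j _ => sq_nonneg (x j)) hk)
  · simp [apply_eq_zero hx hk]

lemma isCompact_inter_pi (R : ℝ) :
    IsCompact (dirichletSpace T ∩ univ.pi fun _ => Icc (-R) R) :=
  (isCompact_univ_pi fun _ => isCompact_Icc).inter_left isClosed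

-- Only the coordinates `1, …, T` of points of `dirichletSpace T` vary, so the box is a relative
-- neighbourhood although it is not a neighbourhood in the product topology.
lemma inter_pi_mem_nhdsWithin {r R : ℝ}
    (hxr : x ∈ univ.pi fun _ => Icc (-r) r) (hrR : r < R) :
    dirichletSpace T ∩ (univ.pi fun _ => Icc (-R) R) ∈ 𝓝[dirichletSpace T] x := by
  have hr : 0 ≤ r := by linarith [(hxr 0 trivial).1, (hxr 0 trivial).2]
  refine mem_nhdsWithin.2 ⟨(Finset.Icc 1 T : Set ℕ).pi fun _ => Ioo (-R) R,
    isOpen_set_pi (Finset.Icc 1 T).finite_toSet fun _ _ => isOpen_Ioo,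
    fun k _ => ⟨by linarith [(hxr k trivial).1], by linarith [(hxr k trivial).2]⟩,
    fun y ⟨hyW, hyS⟩ => ⟨hyS, fun k _ => ?_⟩⟩
  by_cases hk : k ∈ Finset.Icc 1 T
  · exact Ioo_subset_Icc_self (hyW k hk)
  · rw [apply_eq_zero hyS hk]
    constructor <;> linarith

variable {f : (ℕ → ℝ) → (ℕ → ℝ) → ℝ} {r : ℝ}

lemma exists_isSaddlePointOn (hf : Continuous fun p : (ℕ → ℝ) × (ℕ → ℝ) => f p.1 p.2)
    (hconv : ∀ y ∈ dirichletSpace T, ConvexOn ℝ (dirichletSpace T) fun x => f x y)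
    (hconc : ∀ x ∈ dirichletSpace T, ConcaveOn ℝ (dirichletSpace T) (f x))
    (hr : ∀ x ∈ dirichletSpace T, ∀ y ∈ dirichletSpace T, f x 0 ≤ f 0 y →
      (x ∈ univ.pi fun _ => Icc (-r) r) ∧ (y ∈ univ.pi fun _ => Icc (-r) r)) :
    ∃ a ∈ dirichletSpace T, ∃ b ∈ dirichletSpace T, IsSaddlePointOn (dirichletSpace T)
      (dirichletSpace T) f a b := by
  set B := dirichletSpace T ∩ univ.pi fun _ => Icc (-(r + 1)) (r + 1)
  have hB0 : 0 ∈ B := ⟨zero_mem,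
    pi_mono (fun _ _ => Icc_subset_Icc (neg_le_neg (lt_add_one r).le) (lt_add_one r).le)
      (hr 0 zero_mem 0 zero_mem le_rfl).1⟩
  have hBconv : Convex ℝ B := convex.inter (convex_pi fun _ _ => convex_Icc _ _)
  obtain ⟨a, ha, b, hb, hab⟩ := Sion.exists_isSaddlePointOn ⟨0, hB0⟩ hBconv (isCompact_inter_pi _)
    (fun y _ =>
      (hf.comp (continuous_id.prodMk continuous_const)).continuousOn.lowerSemicontinuousOn)
    (fun y hy => ((hconv y hy.1).subset inter_subset_left hBconv).quasiconvexOn)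
    hBconv ⟨0, hB0⟩ (isCompact_inter_pi _)
    (fun x _ =>
      (hf.comp (continuous_const.prodMk continuous_id)).continuousOn.upperSemicontinuousOn)
    (fun x hx => ((hconc x hx.1).subset inter_subset_left hBconv).quasiconcaveOn)
  obtain ⟨har, hbr⟩ := hr a ha.1 b hb.1 (hab 0 hB0 0 hB0)
  exact ⟨a, ha.1, b, hb.1, hab.of_mem_nhdsWithin ha.1 hb.1
    (inter_pi_mem_nhdsWithin har (lt_add_one r)) (inter_pi_mem_nhdsWithin hbr (lt_add_one r))
    (hconv b hb.1) (hconc a ha.1)⟩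

lemma isCompact_setOf_saddlePoint (hf : Continuous fun p : (ℕ → ℝ) × (ℕ → ℝ) => f p.1 p.2)
    (hr : ∀ x ∈ dirichletSpace T, ∀ y ∈ dirichletSpace T, f x 0 ≤ f 0 y →
      (x ∈ univ.pi fun _ => Icc (-r) r) ∧ (y ∈ univ.pi fun _ => Icc (-r) r)) :
    IsCompact {p : (ℕ → ℝ) × (ℕ → ℝ) | p.1 ∈ dirichletSpace T ∧ p.2 ∈ dirichletSpace T ∧
      ∀ x ∈ dirichletSpace T, ∀ y ∈ dirichletSpace T, f p.1 y ≤ f p.1 p.2 ∧ f p.1 p.2 ≤ f x p.2} :=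
  ((isCompact_univ_pi fun _ => isCompact_Icc).prod (isCompact_univ_pi fun _ => isCompact_Icc))
    |>.of_isClosed_subset (isClosed_setOf_saddlePoint isClosed isClosed hf)
    fun _ ⟨hx, hy, h⟩ =>
      hr _ hx _ hy ((h 0 zero_mem 0 zero_mem).1.trans (h 0 zero_mem 0 zero_mem).2)

end dirichletSpace

noncomputable def actionFunctional (T : ℕ) (F : ℕ → ℝ → ℝ → ℝ → ℝ) (u x y : ℕ → ℝ) : ℝ :=
  (∑ k ∈ Finset.Icc 1 (T + 1), ((x k - x (k - 1)) ^ 2 / 2 - (y k - y (k - 1)) ^ 2 / 2)) +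
    ∑ k ∈ Finset.Icc 1 T, F k (x k) (y k) (u k)

namespace actionFunctional

variable {T : ℕ} {F : ℕ → ℝ → ℝ → ℝ → ℝ} {u : ℕ → ℝ}

lemma continuous (hF : ∀ k, Continuous fun p : ℝ × ℝ × ℝ => F k p.1 p.2.1 p.2.2) :
    Continuous fun p : (ℕ → ℝ) × (ℕ → ℝ) => actionFunctional T F u p.1 p.2 := by
  unfold actionFunctional
  refine .add (by fun_prop) (continuous_finsetSum _ fun k _ => ?_)
  exact (hF k).comp (f := fun p : (ℕ → ℝ) × (ℕ → ℝ) => (p.1 k, p.2 k, u k)) (by fun_prop)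

lemma apply_zero_right (x : ℕ → ℝ) : actionFunctional T F u x 0 =
    (∑ k ∈ Finset.Icc 1 (T + 1), (x k - x (k - 1)) ^ 2) / 2 +
      ∑ k ∈ Finset.Icc 1 T, F k (x k) 0 (u k) := by
  simp [actionFunctional, Finset.sum_div]

lemma apply_zero_left (y : ℕ → ℝ) : actionFunctional T F u 0 y =
    -((∑ k ∈ Finset.Icc 1 (T + 1), (y k - y (k - 1)) ^ 2) / 2 +
      ∑ k ∈ Finset.Icc 1 T, -F k 0 (y k) (u k)) := by
  simp [actionFunctional, Finset.sum_div]
  ring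

lemma exists_mem_pi_Icc_of_apply_zero_le {c₂ α₁ β₁ α₂ β₂ : ℝ} {γ₁ γ₂ : ℕ → ℝ} (hc₂pos : 0 < c₂)
    (hc₂ : ∀ x ∈ dirichletSpace T, ∑ k ∈ Finset.Icc 1 T, x k ^ 2 ≤
      c₂ * ∑ k ∈ Finset.Icc 1 (T + 1), (x k - x (k - 1)) ^ 2)
    (hα₁ : α₁ < 1 / (2 * c₂))
    (hlow : ∀ k ∈ Finset.Icc 1 T, ∀ s, -α₁ * s ^ 2 + β₁ * s + γ₁ k ≤ F k s 0 (u k))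
    (hα₂ : α₂ < 1 / (2 * c₂))
    (hupp : ∀ k ∈ Finset.Icc 1 T, ∀ t, F k 0 t (u k) ≤ α₂ * t ^ 2 + β₂ * t + γ₂ k) :
    ∃ r, ∀ x ∈ dirichletSpace T, ∀ y ∈ dirichletSpace T,
      actionFunctional T F u x 0 ≤ actionFunctional T F u 0 y →
        (x ∈ univ.pi fun _ => Icc (-r) r) ∧ (y ∈ univ.pi fun _ => Icc (-r) r) := by
  obtain ⟨δ₁, hδ₁, C₁, hx⟩ :=
    exists_coercive_bound _ hc₂pos hc₂ (G := fun k s => F k s 0 (u k)) hα₁ hlow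
  obtain ⟨δ₂, hδ₂, C₂, hy⟩ := exists_coercive_bound _ hc₂pos hc₂
    (G := fun k t => -F k 0 t (u k)) (β := -β₂) (γ := fun k => -γ₂ k) hα₂
    fun k hk t => by linarith [hupp k hk t]
  refine ⟨√((C₁ + C₂) / δ₁) + √((C₁ + C₂) / δ₂), fun x hxS y hyS hxy => ?_⟩
  rw [apply_zero_right, apply_zero_left] at hxy
  have hQx := Finset.sum_nonneg fun k (_ : k ∈ Finset.Icc 1 T) => sq_nonneg (x k)
  have hQy := Finset.sum_nonneg fun k (_ : k ∈ Finset.Icc 1 T) => sq_nonneg (y k)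
  have hsum := (hx x hxS).trans (hxy.trans (neg_le_neg (hy y hyS)))
  have hxb : ∀ k, |x k| ≤ √((C₁ + C₂) / δ₁) := fun k =>
    (dirichletSpace.abs_apply_le_sqrt_sum_sq hxS k).trans <| Real.sqrt_le_sqrt <|
      (le_div_iff₀ hδ₁).2 (by nlinarith)
  have hyb : ∀ k, |y k| ≤ √((C₁ + C₂) / δ₂) := fun k =>
    (dirichletSpace.abs_apply_le_sqrt_sum_sq hyS k).trans <| Real.sqrt_le_sqrt <|
      (le_div_iff₀ hδ₂).2 (by nlinarith)
  exact ⟨fun k _ => abs_le.1 ((hxb k).trans (le_add_of_nonneg_right (Real.sqrt_nonneg _))),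
    fun k _ => abs_le.1 ((hyb k).trans (le_add_of_nonneg_left (Real.sqrt_nonneg _)))⟩

end actionFunctional

theorem stmt_14_general (T : ℕ) (D : ℝ)
    (S : Set (ℕ → ℝ))
    (hS : S = {x : ℕ → ℝ | x 0 = 0 ∧ ∀ k, T + 1 ≤ k → x k = 0})
    (c₂ : ℝ) (hc₂pos : 0 < c₂)
    (hc₂ : ∀ x ∈ S, ∑ k ∈ Finset.Icc 1 T, (x k) ^ 2 ≤
      c₂ * ∑ k ∈ Finset.Icc 1 (T + 1), (x k - x (k - 1)) ^ 2)
    (F : ℕ → ℝ → ℝ → ℝ → ℝ)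
    -- H1 (continuity of F in all variables):
    (hF : ∀ k, Continuous (fun p : ℝ × ℝ × ℝ => F k p.1 p.2.1 p.2.2))
    (J : (ℕ → ℝ) → (ℕ → ℝ) → (ℕ → ℝ) → ℝ)
    (hJ : ∀ u x y, J u x y =
      (∑ k ∈ Finset.Icc 1 (T + 1),
        ((x k - x (k - 1)) ^ 2 / 2 - (y k - y (k - 1)) ^ 2 / 2)) +
      ∑ k ∈ Finset.Icc 1 T, F k (x k) (y k) (u k))
    -- H2:
    (H2 : ∀ y ∈ S, ∃ α₁ β₁ : ℝ, ∃ γ₁ : ℕ → ℝ, α₁ < 1 / (2 * c₂) ∧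
      ∀ k ∈ Finset.Icc 1 T, ∀ s u : ℝ, |u| ≤ D →
        -α₁ * s ^ 2 + β₁ * s + γ₁ k ≤ F k s (y k) u)
    -- H3:
    (H3 : ∀ x ∈ S, ∃ α₂ β₂ : ℝ, ∃ γ₂ : ℕ → ℝ, α₂ < 1 / (2 * c₂) ∧
      ∀ k ∈ Finset.Icc 1 T, ∀ t u : ℝ, |u| ≤ D →
        F k (x k) t u ≤ α₂ * t ^ 2 + β₂ * t + γ₂ k)
    -- H4:
    (H4 : ∀ u : ℕ → ℝ, (∀ k, |u k| ≤ D) → ∀ y ∈ S, ConvexOn ℝ S (fun x => J u x y))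
    -- H5:
    (H5 : ∀ u : ℕ → ℝ, (∀ k, |u k| ≤ D) → ∀ x ∈ S, ConcaveOn ℝ S (fun y => J u x y)) :
    ∀ u : ℕ → ℝ, (∀ k, |u k| ≤ D) →
      (∃ xu ∈ S, ∃ yu ∈ S, ∀ x ∈ S, ∀ y ∈ S,
        J u xu y ≤ J u xu yu ∧ J u xu yu ≤ J u x yu) ∧
      IsCompact {p : (ℕ → ℝ) × (ℕ → ℝ) | p.1 ∈ S ∧ p.2 ∈ S ∧
        ∀ x ∈ S, ∀ y ∈ S, J u p.1 y ≤ J u p.1 p.2 ∧ J u p.1 p.2 ≤ J u x p.2} := by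
  intro u hu
  obtain rfl : S = dirichletSpace T := hS
  obtain rfl : J = actionFunctional T F := funext fun u => funext fun x => funext (hJ u x)
  obtain ⟨α₁, β₁, γ₁, hα₁, hlow⟩ := H2 0 dirichletSpace.zero_mem
  obtain ⟨α₂, β₂, γ₂, hα₂, hupp⟩ := H3 0 dirichletSpace.zero_mem
  obtain ⟨r, hr⟩ := actionFunctional.exists_mem_pi_Icc_of_apply_zero_le hc₂pos hc₂
    hα₁ (fun k hk s => hlow k hk s _ (hu k)) hα₂ (fun k hk t => hupp k hk t _ (hu k))
  have hcont : Continuous fun p : (ℕ → ℝ) × (ℕ → ℝ) => actionFunctional T F u p.1 p.2 :=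
    actionFunctional.continuous hF
  obtain ⟨a, ha, b, hb, hab⟩ :=
    dirichletSpace.exists_isSaddlePointOn hcont (H4 u hu) (H5 u hu) hr
  exact ⟨⟨a, ha, b, hb, (isSaddlePointOn_iff_forall_le_and_le ha hb).1 hab⟩,
    dirichletSpace.isCompact_setOf_saddlePoint hcont hr⟩

/-- Existence of saddle points for `J_u` under H1–H5, and compactness of the set of all
saddle points, for each parameter `u` with `‖u‖_C ≤ D`. -/
theorem stmt_14 (T : ℕ) (hT : 1 ≤ T) (D : ℝ) (hD : 0 < D)
    (S : Set (ℕ → ℝ))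
    (hS : S = {x : ℕ → ℝ | x 0 = 0 ∧ ∀ k, T + 1 ≤ k → x k = 0})
    (c₂ : ℝ) (hc₂pos : 0 < c₂)
    (hc₂ : ∀ x ∈ S, ∑ k ∈ Finset.Icc 1 T, (x k) ^ 2 ≤
      c₂ * ∑ k ∈ Finset.Icc 1 (T + 1), (x k - x (k - 1)) ^ 2)
    (F : ℕ → ℝ → ℝ → ℝ → ℝ)
    -- H1 (continuity of F in all variables):
    (hF : ∀ k, Continuous (fun p : ℝ × ℝ × ℝ => F k p.1 p.2.1 p.2.2))
    (J : (ℕ → ℝ) → (ℕ → ℝ) → (ℕ → ℝ) → ℝ)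
    (hJ : ∀ u x y, J u x y =
      (∑ k ∈ Finset.Icc 1 (T + 1),
        ((x k - x (k - 1)) ^ 2 / 2 - (y k - y (k - 1)) ^ 2 / 2)) +
      ∑ k ∈ Finset.Icc 1 T, F k (x k) (y k) (u k))
    -- H2:
    (H2 : ∀ y ∈ S, ∃ α₁ β₁ : ℝ, ∃ γ₁ : ℕ → ℝ, α₁ < 1 / (2 * c₂) ∧
      ∀ k ∈ Finset.Icc 1 T, ∀ s u : ℝ, |u| ≤ D →
        -α₁ * s ^ 2 + β₁ * s + γ₁ k ≤ F k s (y k) u)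
    -- H3:
    (H3 : ∀ x ∈ S, ∃ α₂ β₂ : ℝ, ∃ γ₂ : ℕ → ℝ, α₂ < 1 / (2 * c₂) ∧
      ∀ k ∈ Finset.Icc 1 T, ∀ t u : ℝ, |u| ≤ D →
        F k (x k) t u ≤ α₂ * t ^ 2 + β₂ * t + γ₂ k)
    -- H4:
    (H4 : ∀ u : ℕ → ℝ, (∀ k, |u k| ≤ D) → ∀ y ∈ S, ConvexOn ℝ S (fun x => J u x y))
    -- H5:
    (H5 : ∀ u : ℕ → ℝ, (∀ k, |u k| ≤ D) → ∀ x ∈ S, ConcaveOn ℝ S (fun y => J u x y)) :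
    ∀ u : ℕ → ℝ, (∀ k, |u k| ≤ D) →
      (∃ xu ∈ S, ∃ yu ∈ S, ∀ x ∈ S, ∀ y ∈ S,
        J u xu y ≤ J u xu yu ∧ J u xu yu ≤ J u x yu) ∧
      IsCompact {p : (ℕ → ℝ) × (ℕ → ℝ) | p.1 ∈ S ∧ p.2 ∈ S ∧
        ∀ x ∈ S, ∀ y ∈ S, J u p.1 y ≤ J u p.1 p.2 ∧ J u p.1 p.2 ≤ J u x p.2} :=
  stmt_14_general T D S hS c₂ hc₂pos hc₂ F hF J hJ H2 H3 H4 H5
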